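/- arXiv:2509.18724 — 2 statements merged into one kernel-verified Lean document; each statement's English description precedes it below -/
import Mathlib

section
/- Let p be a prime, let S be a finite commutative semigroup such that exp(S) is a power of p, and let R be a commutative unitary ring of characteristic p. If T = s_1⋯s_ℓ is a sequence over S with ℓ ≥ Λ(S), then (X^{s_1} − X^{e(s_1)})⋯(X^{s_ℓ} − X^{e(s_ℓ)}) = 0 in R[X;S], and moreover St(e) ∩ Σ(T) ≠ ∅, where e = e(s_1) + ⋯ + e(s_ℓ). -/
/-!
Write `f x = X^x - X^{e(x)}`. Modulo the idempotent `u = X^{e(x)}` we have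
`f x ^ ρ(x) ≡ X^{ρ(x)·x} = u`, so `f x ^ ρ(x) = (u · f x) ^ ρ(x) = (X^{x + e(x)} - u) ^ ρ(x)`.
The period `π` of `x` is a power of `p` and `π·(x + e(x)) = e(x)`, so the Frobenius identity
kills `(X^{x + e(x)} - u) ^ π`, and `π ≤ ρ(x)` gives `f x ^ ρ(x) = 0`.
From `f (x + y) = X^y f x + X^{e(x)} f y`, every `f s` lies in the ideal generated by the `f a`
for `a` in a generating set `A`; an ideal generated by elements with `f a ^ (n_a + 1) = 0` has
vanishing `(1 + ∑ n_a)`-th power, whence the product of `ℓ ≥ Λ(S)` factors is `0`.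
Expanding that product, the coefficient of `X^e` is `±1` plus signed contributions of the nonempty
`J` with `∑_{i ∈ J} s_i + ∑_{i ∉ J} e(s_i) = e`; so such a `J` exists, and since the `e(s_i)`
are idempotent, `c = ∑_{i ∈ J} s_i` satisfies `c + e = e`.
-/

namespace ZS

variable (S : Type*) [AddCommSemigroup S]

/-- `nsmul' n x = (n+1)·x`, iterated addition in a semigroup. -/
def nsmul' : ℕ → S → S
  | 0, x => x
  | n + 1, x => x + nsmul' n x

/-- The cyclic subsemigroup `⟨x⟩ = {x, 2x, 3x, …}` generated by `x`. -/
def cyc (x : S) : Set S := Set.range fun n => nsmul' S n x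

/-- `x` is periodic if `⟨x⟩` is finite. -/
def IsPeriodicElem (x : S) : Prop := (cyc S x).Finite

/-- A semigroup is periodic if every element is periodic. -/
def IsPeriodicSemigroup : Prop := ∀ x : S, IsPeriodicElem S x

/-- `ρ(x)`: the least `m ≥ 1` such that `m·x` is idempotent (equivalently `m·x = e(x)`). -/
noncomputable def rho (x : S) : ℕ :=
  sInf {n : ℕ | nsmul' S n x + nsmul' S n x = nsmul' S n x} + 1

/-- `e(x)`: the unique idempotent of the finite cyclic semigroup `⟨x⟩`. -/
noncomputable def eIdem (x : S) : S :=
  nsmul' S (sInf {n : ℕ | nsmul' S n x + nsmul' S n x = nsmul' S n x}) x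

/-- The period of a (periodic) element `x`: the least `n > 0` with `(m+n)x = mx` for some `m`. -/
noncomputable def period (x : S) : ℕ :=
  sInf {n : ℕ | 0 < n ∧ ∃ m : ℕ, nsmul' S (m + n) x = nsmul' S m x}

/-- The index of a (periodic) element `x`: the least `k ≥ 1` with `kx = tx` for some `t ≠ k`. -/
noncomputable def indexOf (x : S) : ℕ :=
  sInf {k : ℕ | ∃ t : ℕ, t ≠ k ∧ nsmul' S k x = nsmul' S t x} + 1

/-- `exp(S)`: the lcm of the periods of the elements of `S`, described as the least positive
common multiple of all the periods. -/
noncomputable def expS : ℕ := sInf {n : ℕ | 0 < n ∧ ∀ x : S, period S x ∣ n}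

/-- `K` is a splitting field for exponent `n`: it contains exactly `n` `n`-th roots of unity. -/
def SplitField (K : Type*) [Field K] (n : ℕ) : Prop := Set.ncard {ζ : K | ζ ^ n = 1} = n

/-- Green's preorder `a ≼_𝓗 b`. -/
def gLe (a b : S) : Prop := a = b ∨ ∃ c : S, a = b + c

/-- Green's congruence `a 𝓗 b`. -/
def gEq (a b : S) : Prop := gLe S a b ∧ gLe S b a

/-- `a ≺_𝓗 b`. -/
def gLt (a b : S) : Prop := gLe S a b ∧ ¬ gLe S b a

/-- The Green class `H_a`. -/
def HClass (a : S) : Set S := {x : S | gEq S x a}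

/-- The stabilizer `St(H_a)` of the Green class of `a`. -/
def stab (a : S) : Set S := {c : S | ∀ x ∈ HClass S a, c + x ∈ HClass S a}

theorem gLe_trans {a b c : S} (h1 : gLe S a b) (h2 : gLe S b c) : gLe S a c := by
  rcases h1 with rfl | ⟨u, rfl⟩
  · exact h2
  · rcases h2 with rfl | ⟨v, rfl⟩
    · exact Or.inr ⟨u, rfl⟩
    · exact Or.inr ⟨v + u, by rw [add_assoc]⟩

theorem gLe_add_right {a b : S} (x : S) (h : gLe S a b) : gLe S (a + x) (b + x) := by
  rcases h with rfl | ⟨c, rfl⟩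
  · exact Or.inl rfl
  · exact Or.inr ⟨c, by rw [add_right_comm]⟩

theorem gEq_add {w x y z : S} (h1 : gEq S w x) (h2 : gEq S y z) : gEq S (w + y) (x + z) := by
  have k1 : gLe S (w + y) (x + y) := gLe_add_right S y h1.1
  have k2 : gLe S (x + y) (x + z) := by
    have h := gLe_add_right S x h2.1
    rwa [add_comm z x, add_comm y x] at h
  have k3 : gLe S (x + z) (w + z) := gLe_add_right S z h1.2
  have k4 : gLe S (w + z) (w + y) := by
    have h := gLe_add_right S w h2.2
    rwa [add_comm z w, add_comm y w] at h
  exact ⟨gLe_trans S k1 k2, gLe_trans S k3 k4⟩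

/-- Green's congruence as an additive congruence. -/
def greenCon : AddCon S where
  r a b := gEq S a b
  iseqv := ⟨fun _ => ⟨Or.inl rfl, Or.inl rfl⟩, fun h => ⟨h.2, h.1⟩,
    fun h1 h2 => ⟨gLe_trans S h1.1 h2.1, gLe_trans S h2.2 h1.2⟩⟩
  add' h1 h2 := gEq_add S h1 h2

/-- The quotient semigroup `S/𝓗`. -/
abbrev GQuot := (greenCon S).Quotient

/-- The canonical epimorphism `S → S/𝓗`, `a ↦ ā`. -/
def gq (a : S) : GQuot S := (a : (greenCon S).Quotient)

/-- The sum of a sequence (multiset) of elements of `S`, computed in `WithZero S`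
(the empty sequence having sum the adjoined zero). -/
def msum (T : Multiset S) : WithZero S := (T.map fun x => (x : WithZero S)).sum

/-- A sequence over a commutative semigroup is (additively) reducible if some proper
(possibly empty) subsequence has the same sum; the empty sequence has sum the identity of `S`,
when `S` has one. -/
def IsReducible (T : Multiset S) : Prop :=
  (∃ T' : Multiset S, T' ≤ T ∧ T' ≠ T ∧ T' ≠ 0 ∧ msum S T' = msum S T) ∨
    (T ≠ 0 ∧ ∃ z : S, msum S T = ↑z ∧ ∀ s : S, z + s = s)

/-- The Davenport constant `D(S)` of a commutative semigroup. -/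
noncomputable def Dav : ℕ∞ :=
  sInf {n : ℕ∞ | ∀ T : Multiset S, (T.card : ℕ∞) ≥ n → IsReducible S T}

/-- The relative Davenport constant `D_a(S)`: the largest length of an additively
irreducible sequence with sum `a`. -/
noncomputable def Drel (a : S) : ℕ∞ :=
  sSup {n : ℕ∞ | ∃ T : Multiset S,
    T ≠ 0 ∧ ¬ IsReducible S T ∧ msum S T = ↑a ∧ n = (T.card : ℕ∞)}

/-- The Erdős–Burgess constant `I(S)`: the smallest `ℓ` such that every sequence over `S` of
length (at least) `ℓ` has a nonempty subsequence with idempotent sum. -/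
noncomputable def EB : ℕ∞ :=
  sInf {n : ℕ∞ | ∀ T : Multiset S, (T.card : ℕ∞) ≥ n →
    ∃ T' : Multiset S, T' ≤ T ∧ T' ≠ 0 ∧ ∃ x : S, msum S T' = ↑x ∧ x + x = x}

/-- The Davenport constant of a (semigroup which is a) group: the smallest `ℓ` such that every
sequence of length (at least) `ℓ` has a nonempty subsequence whose sum is the identity element. -/
noncomputable def DavGrpSet : ℕ∞ :=
  sInf {n : ℕ∞ | ∀ T : Multiset S, (T.card : ℕ∞) ≥ n →
    ∃ T' : Multiset S, T' ≤ T ∧ T' ≠ 0 ∧ ∃ z : S, msum S T' = ↑z ∧ ∀ x : S, z + x = x}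

/-- The Davenport constant of a finite abelian group. -/
noncomputable def DavG (G : Type*) [AddCommMonoid G] : ℕ∞ :=
  sInf {n : ℕ∞ | ∀ T : Multiset G, (T.card : ℕ∞) ≥ n →
    ∃ T' : Multiset G, T' ≤ T ∧ T' ≠ 0 ∧ T'.sum = 0}

/-- `ψ(a)`: the largest length of a strictly ascending chain of principal ideals starting at
`(a)`. -/
noncomputable def psi (a : S) : ℕ∞ :=
  sSup {n : ℕ∞ | ∃ ℓ : ℕ, n = (ℓ : ℕ∞) ∧
    ∃ c : ℕ → S, c 0 = a ∧ ∀ i < ℓ, gLt S (c i) (c (i + 1))}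

/-- `Ψ(S)`: the largest length of a strictly ascending chain of principal ideals of `S`. -/
noncomputable def PsiS : ℕ∞ := ⨆ a : S, psi S a

/-- A subset of a semigroup which is a subgroup: closed under addition, with an identity
and inverses. -/
def IsSubgroupSet (T : Set S) : Prop :=
  (∀ x ∈ T, ∀ y ∈ T, x + y ∈ T) ∧
    ∃ z ∈ T, (∀ x ∈ T, z + x = x) ∧ ∀ x ∈ T, ∃ y ∈ T, x + y = z

open Classical in
/-- `ε_a`: `0` if `⟨a⟩` is a group, `1` otherwise. -/
noncomputable def eps (a : S) : ℕ∞ := if IsSubgroupSet S (cyc S a) then 0 else 1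

/-- The Schützenberger maps on the Green class `H_a`: maps `x ↦ c + x` for `c ∈ St(H_a)`. -/
def GammaSet (a : S) : Set (↥(HClass S a) → ↥(HClass S a)) :=
  {f | ∃ c ∈ stab S a, ∀ x : ↥(HClass S a), (↑(f x) : S) = c + ↑x}

/-- The Schützenberger group `Γ(H_a)` (as a type; it is empty when `St(H_a) = ∅`). -/
def Gamma (a : S) : Type _ := ↥(GammaSet S a)

instance (a : S) : Add (Gamma S a) :=
  ⟨fun f g => ⟨f.1 ∘ g.1, by
    obtain ⟨c, hc, hfc⟩ := f.2
    obtain ⟨d, hd, hgd⟩ := g.2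
    refine ⟨c + d, fun x hx => by rw [add_assoc]; exact hc _ (hd x hx), fun x => ?_⟩
    show (↑(f.1 (g.1 x)) : S) = c + d + ↑x
    rw [hfc (g.1 x), hgd x, add_assoc]⟩⟩

instance (a : S) : AddCommSemigroup (Gamma S a) where
  add_assoc f g h := Subtype.ext rfl
  add_comm f g := by
    obtain ⟨c, hc, hfc⟩ := f.2
    obtain ⟨d, hd, hgd⟩ := g.2
    apply Subtype.ext
    funext x
    apply Subtype.ext
    show (↑(f.1 (g.1 x)) : S) = ↑(g.1 (f.1 x))
    rw [hfc (g.1 x), hgd x, hgd (f.1 x), hfc x, add_left_comm]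

/-- `St(H_a)` as a subsemigroup of `S`. -/
def stabSub (a : S) : AddSubsemigroup S where
  carrier := stab S a
  add_mem' := fun {c d} hc hd x hx => by rw [add_assoc]; exact hc _ (hd x hx)

/-- The canonical surjection `π_a : St(H_a) → Γ(H_a)`, `c ↦ γ_c`. -/
def gammaMap (a : S) (c : ↥(stabSub S a)) : Gamma S a :=
  ⟨fun x => ⟨(↑c : S) + ↑x, c.2 ↑x x.2⟩, ⟨↑c, c.2, fun _ => rfl⟩⟩

/-- The semigroup algebra `R[X;S]` of a commutative semigroup, realized inside the monoid
algebra of the monoid obtained from `S` by adjoining an identity element. -/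
abbrev SAlg (R : Type*) [CommRing R] (S : Type*) [AddCommSemigroup S] :=
  AddMonoidAlgebra R (WithZero S)

/-- The monomial `r·X^s` of the semigroup algebra. -/
noncomputable def Xm (R : Type*) [CommRing R] {S : Type*} [AddCommSemigroup S] (s : S) (r : R) :
    SAlg R S := AddMonoidAlgebra.single (↑s) r

/-- The factor `X^s - a·X^{e(s)}` of the semigroup algebra. -/
noncomputable def facX (R : Type*) [CommRing R] {S : Type*} [AddCommSemigroup S]
    (s : S) (a : R) : SAlg R S := Xm R s 1 - Xm R (eIdem S s) a

/-- The invariant `d(S,R)`: the supremum of all `ℓ` such that some sequence `s_1,…,s_ℓ` over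
`S` satisfies `(X^{s_1} - a_1 X^{e(s_1)}) ⋯ (X^{s_ℓ} - a_ℓ X^{e(s_ℓ)}) ≠ 0` in `R[X;S]` for all
nonzero `a_1, …, a_ℓ ∈ R`. -/
noncomputable def dd (R : Type*) [CommRing R] (S : Type*) [AddCommSemigroup S] : ℕ∞ :=
  sSup {n : ℕ∞ | ∃ ℓ : ℕ, n = (ℓ : ℕ∞) ∧ ∃ s : Fin ℓ → S,
    ∀ a : Fin ℓ → R, (∀ i, a i ≠ 0) → ∏ i, facX R (s i) (a i) ≠ 0}

/-- `Λ(S)`: the minimum over all generating sets `A` of `S` of `1 + Σ_{a∈A} (ρ(a)-1)`. -/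
noncomputable def Lam (S : Type*) [AddCommSemigroup S] : ℕ :=
  sInf {n : ℕ | ∃ A : Finset S,
    AddSubsemigroup.closure (↑A : Set S) = ⊤ ∧ n = 1 + ∑ a ∈ A, (rho S a - 1)}

/-- An elementary semigroup: an ideal extension of a nilsemigroup `N` by a group with zero
`G ∪ {∞}`. -/
def IsElementary : Prop :=
  ∃ G N : Set S, G ∪ N = Set.univ ∧ Disjoint G N ∧ IsSubgroupSet S G ∧
    (∀ x ∈ N, ∀ s : S, s + x ∈ N) ∧
    ∃ z ∈ N, (∀ s : S, s + z = z) ∧ ∀ x ∈ N, ∃ n : ℕ, nsmul' S n x = z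

lemma _root_.sub_pow_eq_zero_of_isIdempotentElem {A : Type*} [CommRing A] {p : ℕ} [ExpChar A p]
    {u y : A} {n k : ℕ} (hu : IsIdempotentElem u) (hy : y ^ n = u) (huy : (u * y) ^ p ^ k = u)
    (hk : p ^ k ≤ n) : (y - u) ^ n = 0 := by
  have hpk : p ^ k ≠ 0 := (expChar_pow_pos A p k).ne'
  -- `(y - u)^n ≡ y^n = u` modulo `u`, so `u` acts on `(y - u)^n` as the identity
  obtain ⟨c, hc⟩ : u ∣ (y - u) ^ n - y ^ n := by simpa using sub_dvd_pow_sub_pow (y - u) y n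
  have hfix : u * (y - u) ^ n = (y - u) ^ n := by
    rw [sub_eq_iff_eq_add.1 hc, hy, mul_add, ← mul_assoc, hu.eq]
  have hnil : (u * y - u) ^ p ^ k = 0 := by
    rw [sub_pow_expChar_pow, huy, hu.pow_eq hpk, sub_self]
  calc (y - u) ^ n = u ^ n * (y - u) ^ n := by rw [hu.pow_eq (by omega), hfix]
    _ = (u * y - u) ^ n := by rw [← mul_pow, mul_sub, hu.eq]
    _ = 0 := pow_eq_zero_of_le hk hnil

lemma _root_.Ideal.sup_pow_add_add_one_le {T : Type*} [CommSemiring T] (I J : Ideal T) (m n : ℕ) :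
    (I ⊔ J) ^ (m + n + 1) ≤ I ^ (m + 1) ⊔ J ^ (n + 1) := by
  rw [← Ideal.add_eq_sup, ← Ideal.add_eq_sup, add_pow, Ideal.sum_eq_sup]
  refine Finset.sup_le fun i hi => ?_
  rw [Finset.mem_range] at hi
  by_cases hm : m + 1 ≤ i
  · exact Ideal.mul_le_left.trans (Ideal.mul_le_left.trans
      ((Ideal.pow_le_pow_right hm).trans le_sup_left))
  · exact Ideal.mul_le_left.trans (Ideal.mul_le_right.trans
      ((Ideal.pow_le_pow_right (by omega)).trans le_sup_right))

lemma _root_.Ideal.span_image_pow_eq_bot {T α : Type*} [CommRing T] (A : Finset α)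
    (f : α → T) (n : α → ℕ) (h : ∀ a ∈ A, f a ^ (n a + 1) = 0) :
    Ideal.span (f '' A) ^ (∑ a ∈ A, n a + 1) = ⊥ := by
  classical
  induction A using Finset.induction_on with
  | empty => simp
  | insert b A hb ih =>
    rw [Finset.coe_insert, Set.image_insert_eq, Ideal.span_insert, Finset.sum_insert hb,
      add_assoc, eq_bot_iff]
    refine (Ideal.sup_pow_add_add_one_le _ _ _ _).trans ?_
    rw [Ideal.span_singleton_pow, h b (Finset.mem_insert_self b A),
      Ideal.span_singleton_eq_bot.2 rfl, ih fun a ha => h a (Finset.mem_insert_of_mem ha),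
      sup_bot_eq]

lemma _root_.Finset.add_sum_eq_sum_of_add_sum_sdiff_eq {M ι : Type*} [AddCommMonoid M]
    [DecidableEq ι] {t J : Finset ι} (hJ : J ⊆ t) {v : ι → M} (hv : ∀ i, v i + v i = v i)
    {x : M} (h : x + ∑ i ∈ t \ J, v i = ∑ i ∈ t, v i) :
    x + ∑ i ∈ t, v i = ∑ i ∈ t, v i := by
  have hidem : ∑ i ∈ J, v i + ∑ i ∈ J, v i = ∑ i ∈ J, v i := by
    rw [← Finset.sum_add_distrib]; simp only [hv]
  calc x + ∑ i ∈ t, v i = x + ∑ i ∈ t \ J, v i + ∑ i ∈ J, v i := by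
        rw [← Finset.sum_sdiff hJ, add_assoc]
    _ = ∑ i ∈ t \ J, v i + (∑ i ∈ J, v i + ∑ i ∈ J, v i) := by
        rw [h, ← Finset.sum_sdiff hJ, add_assoc]
    _ = ∑ i ∈ t, v i := by rw [hidem, Finset.sum_sdiff hJ]

open AddMonoidAlgebra in
lemma _root_.AddMonoidAlgebra.exists_sum_add_sum_sdiff_eq_of_prod_eq_zero {R M ι : Type*}
    [CommRing R] [Nontrivial R] [AddCommMonoid M] [DecidableEq ι] (t : Finset ι) (u v : ι → M)
    (h : ∏ i ∈ t, (single (u i) 1 - single (v i) 1 : AddMonoidAlgebra R M) = 0) :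
    ∃ J ⊆ t, J.Nonempty ∧ ∑ i ∈ J, u i + ∑ i ∈ t \ J, v i = ∑ i ∈ t, v i := by
  by_contra! hne
  have hexp : ∏ i ∈ t, (single (u i) 1 - single (v i) 1 : AddMonoidAlgebra R M) =
      ∑ J ∈ t.powerset,
        single (∑ i ∈ J, u i + ∑ i ∈ t \ J, v i) ((-1) ^ (t \ J).card) := by
    simp_rw [sub_eq_add_neg, ← single_neg, Finset.prod_add, prod_single, single_mul_single,
      Finset.prod_const_one, one_mul, Finset.prod_const]
  -- only `J = ∅` contributes to the coefficient of `∑ v`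
  have hcoeff := congrArg (fun f => f.coeff (∑ i ∈ t, v i)) (hexp.symm.trans h)
  simp only [coeff_sum, Finsupp.finsetSum_apply, coeff_zero, Finsupp.zero_apply] at hcoeff
  rw [Finset.sum_eq_single_of_mem ∅ (Finset.empty_mem_powerset t)] at hcoeff
  · simp only [Finset.sum_empty, Finset.sdiff_empty, zero_add, coeff_single,
      Finsupp.single_eq_same] at hcoeff
    exact (isUnit_neg_one.pow _).ne_zero hcoeff
  · intro J hJ hJe
    exact Finsupp.single_eq_of_ne
      (hne J (Finset.mem_powerset.1 hJ) (Finset.nonempty_iff_ne_empty.2 hJe)).symm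

section CyclicSubsemigroup

variable {S}

lemma nsmul'_add (x : S) (m n : ℕ) :
    nsmul' S (m + n + 1) x = nsmul' S m x + nsmul' S n x := by
  induction m with
  | zero => rw [zero_add]; rfl
  | succ k ih => rw [show k + 1 + n + 1 = k + n + 1 + 1 by omega, nsmul', ih, nsmul', add_assoc]

lemma nsmul'_add_distrib (x y : S) (n : ℕ) :
    nsmul' S n (x + y) = nsmul' S n x + nsmul' S n y := by
  induction n with
  | zero => rfl
  | succ k ih => rw [nsmul', nsmul', nsmul', ih, add_add_add_comm]

lemma nsmul'_of_add_self {a : S} (h : a + a = a) (n : ℕ) : nsmul' S n a = a := by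
  induction n with
  | zero => rfl
  | succ k ih => rw [nsmul', ih, h]

lemma nsmul'_add_mul_of_add_eq {x : S} {m d : ℕ} (h : nsmul' S (m + d) x = nsmul' S m x)
    (r k : ℕ) : nsmul' S (m + r + k * d) x = nsmul' S (m + r) x := by
  have step : ∀ r, nsmul' S (m + r + d) x = nsmul' S (m + r) x := by
    rintro (_ | r)
    · exact h
    · rw [show m + (r + 1) + d = r + (m + d) + 1 by omega, nsmul'_add, h, ← nsmul'_add]
      congr 1
      omega
  induction k with
  | zero => simp
  | succ k ih =>
    rw [show m + r + (k + 1) * d = m + (r + k * d) + d by ring, step, ← add_assoc, ih]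

lemma nsmul'_mul_sub_one_of_add_self {x : S} {n k : ℕ}
    (h : nsmul' S n x + nsmul' S n x = nsmul' S n x) (hk : 0 < k) :
    nsmul' S ((n + 1) * k - 1) x = nsmul' S n x := by
  obtain ⟨k, rfl⟩ : ∃ k', k = k' + 1 := ⟨k - 1, by omega⟩
  have hperiod : nsmul' S (n + (n + 1)) x = nsmul' S n x := by rw [← add_assoc, nsmul'_add, h]
  rw [show (n + 1) * (k + 1) - 1 = n + 0 + k * (n + 1) by
      rw [Nat.sub_eq_iff_eq_add (by positivity : 0 < (n + 1) * (k + 1))]; ring,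
    nsmul'_add_mul_of_add_eq hperiod, add_zero]

lemma exists_nsmul'_add_self [Finite S] (x : S) :
    ∃ n, nsmul' S n x + nsmul' S n x = nsmul' S n x := by
  obtain ⟨i, j, hlt, hij⟩ := Set.finite_univ.exists_lt_map_eq_of_forall_mem
    (f := fun n => nsmul' S n x) fun _ => Set.mem_univ _
  obtain ⟨d, rfl⟩ := Nat.exists_eq_add_of_lt hlt
  -- `⟨x⟩` is periodic with period `d + 1` from `i` on; take `n ≥ i` with `d + 1 ∣ n + 1`
  refine ⟨i + (i * d + d), ?_⟩
  rw [← nsmul'_add, ← nsmul'_add_mul_of_add_eq (m := i) (d := d + 1) hij.symm _ (i + 1)]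
  congr 1
  ring

lemma nsmul'_rho_sub_one (x : S) : nsmul' S (rho S x - 1) x = eIdem S x := by
  simp [rho, eIdem]

lemma rho_pos (x : S) : 0 < rho S x := Nat.succ_pos _

lemma eIdem_add_self [Finite S] (x : S) : eIdem S x + eIdem S x = eIdem S x :=
  Nat.sInf_mem (exists_nsmul'_add_self x)

lemma nsmul'_rho_mul_sub_one [Finite S] (x : S) {k : ℕ} (hk : 0 < k) :
    nsmul' S (rho S x * k - 1) x = eIdem S x := by
  have h := nsmul'_mul_sub_one_of_add_self (x := x) (n := rho S x - 1)
    (by rw [nsmul'_rho_sub_one, eIdem_add_self]) hk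
  rwa [Nat.sub_add_cancel (rho_pos x), nsmul'_rho_sub_one] at h

lemma nsmul'_eq_eIdem_of_add_self [Finite S] {x : S} {n : ℕ}
    (h : nsmul' S n x + nsmul' S n x = nsmul' S n x) : nsmul' S n x = eIdem S x := by
  rw [← nsmul'_mul_sub_one_of_add_self h (rho_pos x), mul_comm,
    nsmul'_rho_mul_sub_one x n.succ_pos]

lemma eIdem_add [Finite S] (x y : S) : eIdem S (x + y) = eIdem S x + eIdem S y := by
  have hN := nsmul'_add_distrib x y (rho S x * rho S y - 1)
  rw [nsmul'_rho_mul_sub_one x (rho_pos y), mul_comm, nsmul'_rho_mul_sub_one y (rho_pos x)] at hN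
  refine (nsmul'_eq_eIdem_of_add_self ?_).symm.trans hN
  rw [hN, add_add_add_comm, eIdem_add_self, eIdem_add_self]

end CyclicSubsemigroup

section Period

variable {S} [Finite S]

lemma rho_mem_periods (x : S) :
    0 < rho S x ∧ ∃ m, nsmul' S (m + rho S x) x = nsmul' S m x := by
  refine ⟨rho_pos x, rho S x - 1, ?_⟩
  rw [nsmul'_rho_sub_one, show rho S x - 1 + rho S x = rho S x * 2 - 1 by omega,
    nsmul'_rho_mul_sub_one x two_pos]

lemma period_mem_periods (x : S) :
    0 < period S x ∧ ∃ m, nsmul' S (m + period S x) x = nsmul' S m x :=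
  Nat.sInf_mem (s := {n | 0 < n ∧ ∃ m, nsmul' S (m + n) x = nsmul' S m x})
    ⟨_, rho_mem_periods x⟩

lemma period_le_rho (x : S) : period S x ≤ rho S x :=
  Nat.sInf_le (rho_mem_periods x)

lemma nsmul'_period_sub_one_add_eIdem (x : S) :
    nsmul' S (period S x - 1) (x + eIdem S x) = eIdem S x := by
  obtain ⟨hd, m, hm⟩ := period_mem_periods x
  -- `e(x) = nsmul' N x` for some `N ≥ m`, beyond which `⟨x⟩` repeats with period `period x`
  set N := rho S x * (m + 1) - 1
  have hN : nsmul' S N x = eIdem S x := nsmul'_rho_mul_sub_one x m.succ_pos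
  have hmN : m + (N - m) = N := by
    have := Nat.le_mul_of_pos_left (m + 1) (rho_pos x); omega
  have hper := nsmul'_add_mul_of_add_eq hm (N - m) 1
  rw [hmN, one_mul] at hper
  rw [nsmul'_add_distrib, nsmul'_of_add_self (eIdem_add_self x), ← hN, ← nsmul'_add,
    show period S x - 1 + N + 1 = N + period S x by omega, hper]

end Period

variable {S} in
lemma period_dvd_expS [Fintype S] (x : S) : period S x ∣ expS S :=
  (Nat.sInf_mem (s := {n | 0 < n ∧ ∀ y : S, period S y ∣ n})
    ⟨∏ y, period S y, Finset.prod_pos fun y _ => (period_mem_periods y).1,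
      fun y => Finset.dvd_prod_of_mem _ (Finset.mem_univ y)⟩).2 x

lemma exists_generating_finset_eq_Lam [Fintype S] :
    ∃ A : Finset S, AddSubsemigroup.closure (A : Set S) = ⊤ ∧
      Lam S = 1 + ∑ a ∈ A, (rho S a - 1) :=
  Nat.sInf_mem (s := {n | ∃ A : Finset S, AddSubsemigroup.closure (A : Set S) = ⊤ ∧
      n = 1 + ∑ a ∈ A, (rho S a - 1)})
    ⟨_, Finset.univ, by rw [Finset.coe_univ, AddSubsemigroup.closure_univ], rfl⟩

section SemigroupAlgebra

variable {S} (R : Type*) [CommRing R]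

lemma coe_nsmul' (a : S) (n : ℕ) :
    ((nsmul' S n a : S) : WithZero S) = (n + 1) • (a : WithZero S) := by
  induction n with
  | zero => rw [zero_add, one_nsmul]; rfl
  | succ k ih => rw [nsmul', WithZero.coe_add, ih, succ_nsmul' _ (k + 1)]

lemma exists_coe_eq_sum {ι : Type*} {t : Finset ι} (ht : t.Nonempty) (v : ι → S) :
    ∃ c : S, (c : WithZero S) = ∑ i ∈ t, (v i : WithZero S) := by
  induction ht using Finset.Nonempty.cons_induction with
  | singleton a => exact ⟨v a, by simp⟩
  | cons a t ha _ ih =>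
    obtain ⟨c, hc⟩ := ih
    exact ⟨v a + c, by rw [Finset.sum_cons, WithZero.coe_add, hc]⟩

lemma Xm_mul (a b : S) : Xm R a 1 * Xm R b 1 = Xm R (a + b) 1 := by
  rw [Xm, Xm, Xm, AddMonoidAlgebra.single_mul_single, mul_one, WithZero.coe_add]

lemma Xm_pow (a : S) (n : ℕ) : Xm R a 1 ^ (n + 1) = Xm R (nsmul' S n a) 1 := by
  rw [Xm, Xm, AddMonoidAlgebra.single_pow, one_pow, coe_nsmul']

lemma facX_add [Finite S] (x y : S) :
    facX R (x + y) 1 = Xm R y 1 * facX R x 1 + Xm R (eIdem S x) 1 * facX R y 1 := by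
  rw [facX, facX, facX, mul_sub, mul_sub, Xm_mul, Xm_mul, Xm_mul, Xm_mul, eIdem_add,
    add_comm y x, add_comm (eIdem S x) y, sub_add_sub_cancel]

lemma facX_pow_rho_eq_zero [Finite S] {p : ℕ} [ExpChar R p] {x : S} {k : ℕ}
    (hx : period S x = p ^ k) : facX R x 1 ^ rho S x = 0 := by
  have := expChar_of_injective_algebraMap (FaithfulSMul.algebraMap_injective R (SAlg R S)) p
  have hρ : rho S x - 1 + 1 = rho S x := Nat.sub_add_cancel (rho_pos x)
  have hd : period S x - 1 + 1 = period S x := Nat.sub_add_cancel (period_mem_periods x).1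
  refine sub_pow_eq_zero_of_isIdempotentElem (k := k) ?_ ?_ ?_ (hx ▸ period_le_rho x)
  · rw [IsIdempotentElem, Xm_mul, eIdem_add_self]
  · rw [← hρ, Xm_pow, nsmul'_rho_sub_one]
  · rw [Xm_mul, ← hx, ← hd, Xm_pow, add_comm, nsmul'_period_sub_one_add_eIdem]

lemma facX_mem_span_of_closure_eq_top [Finite S] {A : Set S}
    (hA : AddSubsemigroup.closure A = ⊤) (s : S) :
    facX R s 1 ∈ Ideal.span ((fun a => facX R a 1) '' A) := by
  induction (hA ▸ AddSubsemigroup.mem_top s : s ∈ AddSubsemigroup.closure A)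
    using AddSubsemigroup.closure_induction with
  | mem a ha => exact Ideal.subset_span ⟨a, ha, rfl⟩
  | add x y _ _ hx hy =>
    rw [facX_add]
    exact Ideal.add_mem _ (Ideal.mul_mem_left _ _ hx) (Ideal.mul_mem_left _ _ hy)

theorem prod_facX_eq_zero [Fintype S] {p : ℕ} [ExpChar R p]
    (hper : ∀ x : S, ∃ k, period S x = p ^ k) {ι : Type*} [Fintype ι] (s : ι → S)
    (hl : Lam S ≤ Fintype.card ι) : ∏ i, facX R (s i) 1 = 0 := by
  obtain ⟨A, hA, hLam⟩ := exists_generating_finset_eq_Lam S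
  set I := Ideal.span ((fun a => facX R a 1) '' (A : Set S))
  have hI : I ^ Lam S = ⊥ := by
    rw [hLam, add_comm]
    refine Ideal.span_image_pow_eq_bot A _ _ fun a _ => ?_
    obtain ⟨k, hk⟩ := hper a
    rw [Nat.sub_add_cancel (rho_pos a)]
    exact facX_pow_rho_eq_zero R hk
  have hmem : ∏ i, facX R (s i) 1 ∈ I ^ Fintype.card ι := by
    have := Ideal.prod_mem_prod (s := Finset.univ) (I := fun _ => I)
      fun i _ => facX_mem_span_of_closure_eq_top R hA (s i)
    rwa [Finset.prod_const, Finset.card_univ] at this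
  simpa [hI] using Ideal.pow_le_pow_right hl hmem

theorem exists_add_eq_of_prod_facX_eq_zero [Finite S] [Nontrivial R] {ι : Type*} [Fintype ι]
    {s : ι → S} (h : ∏ i, facX R (s i) 1 = 0) {e : S}
    (he : (e : WithZero S) = ∑ i, (eIdem S (s i) : WithZero S)) :
    ∃ c : S, c + e = e ∧
      ∃ I : Finset ι, I.Nonempty ∧ (c : WithZero S) = ∑ i ∈ I, (s i : WithZero S) := by
  classical
  obtain ⟨J, -, hJ, hsum⟩ := AddMonoidAlgebra.exists_sum_add_sum_sdiff_eq_of_prod_eq_zero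
    Finset.univ (fun i => (s i : WithZero S)) (fun i => (eIdem S (s i) : WithZero S)) h
  obtain ⟨c, hc⟩ := exists_coe_eq_sum hJ s
  refine ⟨c, WithZero.coe_injective ?_, J, hJ, hc⟩
  rw [WithZero.coe_add, hc, he]
  exact Finset.add_sum_eq_sum_of_add_sum_sdiff_eq (Finset.subset_univ J)
    (fun i => by rw [← WithZero.coe_add, eIdem_add_self]) hsum

end SemigroupAlgebra

theorem stmt7_general (p : ℕ) (hp : p.Prime) (S : Type*) [AddCommSemigroup S] [Fintype S]
    (hexp : ∃ t : ℕ, expS S = p ^ t)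
    (R : Type*) [CommRing R] [CharP R p]
    (ℓ : ℕ) (s : Fin ℓ → S) (hl : Lam S ≤ ℓ) :
    (∏ i, facX R (s i) (1 : R)) = 0 ∧
    ∀ e : S, ((e : WithZero S) = ∑ i, (↑(eIdem S (s i)) : WithZero S)) →
      ∃ c : S, c + e = e ∧
        ∃ I : Finset (Fin ℓ), I.Nonempty ∧ (↑c : WithZero S) = ∑ i ∈ I, ↑(s i) := by
  have : Fact p.Prime := ⟨hp⟩
  have : Nontrivial R := CharP.nontrivial_of_char_ne_one (R := R) hp.ne_one
  obtain ⟨t, ht⟩ := hexp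
  have hper (x : S) : ∃ k, period S x = p ^ k := by
    obtain ⟨k, -, hk⟩ := (Nat.dvd_prime_pow hp).1 (ht ▸ period_dvd_expS x)
    exact ⟨k, hk⟩
  have hprod := prod_facX_eq_zero R hper s (by rwa [Fintype.card_fin])
  exact ⟨hprod, fun e he => exists_add_eq_of_prod_facX_eq_zero R hprod he⟩

/-- vanishing of products of length `≥ Λ(S)` in characteristic `p`. -/
theorem stmt7 (p : ℕ) (hp : p.Prime) (S : Type*) [AddCommSemigroup S] [Fintype S] [Nonempty S]
    (hexp : ∃ t : ℕ, expS S = p ^ t)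
    (R : Type*) [CommRing R] [CharP R p]
    (ℓ : ℕ) (s : Fin ℓ → S) (hl : Lam S ≤ ℓ) :
    (∏ i, facX R (s i) (1 : R)) = 0 ∧
    ∀ e : S, ((e : WithZero S) = ∑ i, (↑(eIdem S (s i)) : WithZero S)) →
      ∃ c : S, c + e = e ∧
        ∃ I : Finset (Fin ℓ), I.Nonempty ∧ (↑c : WithZero S) = ∑ i ∈ I, ↑(s i) :=
  stmt7_general p hp S hexp R ℓ s hl

end ZS
end

section
/- Let S be a commutative periodic semigroup, let T = s_1⋯s_m be a sequence over S, let R be an integral domain, and let a_1,…,a_m ∈ R∖{0}. Write f = (X^{s_1} − a_1 X^{e(s_1)})⋯(X^{s_m} − a_m X^{e(s_m)}) = Σ_{s∈S} c_s X^s in R[X;S], and set e = e(s_1) + ⋯ + e(s_m). If St(e) ∩ Σ(T) = ∅, then c_e ≠ 0; in particular f ≠ 0. -/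
/-!
Expanding the product over subsets `I`, the monomial indexed by `I` is
`X^(Σ_{i∈I} s_i + Σ_{i∉I} e(s_i))` with coefficient `∏_{i∉I} (-a_i)`; the empty subset
contributes `∏ (-a_i) · X^e`. If a nonempty `I` also landed on `e`, then `c = Σ_{i∈I} s_i` would
satisfy `c + e = e`, because `e` absorbs each idempotent `e(s_i)`: adding `Σ_{i∈I} e(s_i)` to
both sides of `c + Σ_{i∉I} e(s_i) = e` gives `c + e = e`. So `c_e = ∏ (-a_i) ≠ 0`.
-/

namespace WithZero

theorem exists_sum_coe_eq_coe {ι S : Type*} [AddCommSemigroup S] (f : ι → S) {t : Finset ι}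
    (ht : t.Nonempty) : ∃ c : S, ∑ i ∈ t, (f i : WithZero S) = c := by
  induction ht using Finset.Nonempty.cons_induction with
  | singleton j => exact ⟨f j, Finset.sum_singleton _ _⟩
  | cons j t hj _ ih =>
    obtain ⟨c, hc⟩ := ih
    exact ⟨f j + c, by rw [Finset.sum_cons, hc, WithZero.coe_add]⟩

end WithZero

namespace Finset

variable {ι M : Type*} [AddCommMonoid M] {E : ι → M}

theorem sum_add_sum_self_of_idem (hE : ∀ i, E i + E i = E i) (t : Finset ι) :
    ∑ i ∈ t, E i + ∑ i ∈ t, E i = ∑ i ∈ t, E i := by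
  rw [← sum_add_distrib]; exact sum_congr rfl fun i _ => hE i

theorem add_sum_eq_of_add_sum_sdiff_eq [DecidableEq ι] (hE : ∀ i, E i + E i = E i)
    {t u : Finset ι} (htu : t ⊆ u) {z : M} (hz : z + ∑ i ∈ u \ t, E i = ∑ i ∈ u, E i) :
    z + ∑ i ∈ u, E i = ∑ i ∈ u, E i := by
  rw [← sum_sdiff htu, ← add_assoc, hz, ← sum_sdiff htu, add_assoc,
    sum_add_sum_self_of_idem hE]

end Finset

namespace AddMonoidAlgebra

variable {ι M R : Type*} [DecidableEq ι] [AddCommMonoid M] [CommSemiring R]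

theorem prod_single_add_single (u : Finset ι) (x y : ι → M) (b : ι → R) :
    ∏ i ∈ u, (single (x i) 1 + single (y i) (b i)) =
      ∑ t ∈ u.powerset, single (∑ i ∈ t, x i + ∑ i ∈ u \ t, y i) (∏ i ∈ u \ t, b i) := by
  rw [Finset.prod_add]
  refine Finset.sum_congr rfl fun t _ => ?_
  rw [prod_single, prod_single, single_mul_single, Finset.prod_const_one, one_mul]

theorem coeff_prod_single_add_single (u : Finset ι) (x y : ι → M) (b : ι → R)
    (hxy : ∀ t ⊆ u, t.Nonempty → ∑ i ∈ t, x i + ∑ i ∈ u \ t, y i ≠ ∑ i ∈ u, y i) :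
    (∏ i ∈ u, (single (x i) 1 + single (y i) (b i))).coeff (∑ i ∈ u, y i) = ∏ i ∈ u, b i := by
  rw [prod_single_add_single, coeff_sum, Finsupp.finsetSum_apply,
    Finset.sum_eq_single_of_mem ∅ (Finset.empty_mem_powerset u)]
  · simp
  · intro t ht hne
    rw [coeff_single, Finsupp.single_eq_of_ne]
    exact (hxy t (Finset.mem_powerset.mp ht) (Finset.nonempty_iff_ne_empty.mpr hne)).symm

end AddMonoidAlgebra

namespace ZS

variable (S : Type*) [AddCommSemigroup S]

theorem nsmul'_add_nsmul' (x : S) (a b : ℕ) :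
    nsmul' S a x + nsmul' S b x = nsmul' S (a + b + 1) x := by
  induction a with
  | zero => rw [Nat.zero_add]; rfl
  | succ a ih =>
    rw [show a + 1 + b + 1 = a + b + 1 + 1 by omega]
    exact (add_assoc x _ _).trans (congrArg (x + ·) ih)

theorem nsmul'_add_of_eq (x : S) {p q : ℕ} (h : nsmul' S p x = nsmul' S q x) (t : ℕ) :
    nsmul' S (p + t) x = nsmul' S (q + t) x := by
  induction t with
  | zero => exact h
  | succ t ih => exact congrArg (x + ·) ih

theorem nsmul'_add_mul_of_eq (x : S) {i p : ℕ} (h : nsmul' S (i + p) x = nsmul' S i x)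
    (k : ℕ) : nsmul' S (i + k * p) x = nsmul' S i x := by
  induction k with
  | zero => rw [zero_mul, add_zero]
  | succ k ih =>
    rw [← ih, show i + (k + 1) * p = i + p + k * p by ring]
    exact nsmul'_add_of_eq S x h (k * p)

theorem IsPeriodicElem.exists_nsmul'_add_eq {x : S} (hx : IsPeriodicElem S x) :
    ∃ i p : ℕ, 0 < p ∧ nsmul' S (i + p) x = nsmul' S i x := by
  obtain ⟨u, v, huv, hne⟩ := Function.not_injective_iff.mp
    fun hinj => Set.infinite_range_of_injective hinj hx
  rcases Nat.lt_or_gt_of_ne hne with hlt | hlt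
  · exact ⟨u, v - u, by omega, by rw [Nat.add_sub_cancel' hlt.le]; exact huv.symm⟩
  · exact ⟨v, u - v, by omega, by rw [Nat.add_sub_cancel' hlt.le]; exact huv⟩

theorem IsPeriodicElem.exists_nsmul'_idem {x : S} (hx : IsPeriodicElem S x) :
    ∃ n : ℕ, nsmul' S n x + nsmul' S n x = nsmul' S n x := by
  obtain ⟨i, p, hp, hip⟩ := hx.exists_nsmul'_add_eq
  -- `n + 1 = (i + 1) p` is a multiple of the period and `n ≥ i`, so `(2n + 1) x = n x`.
  refine ⟨(i + 1) * p - 1, ?_⟩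
  have hle : i + 1 ≤ (i + 1) * p := Nat.le_mul_of_pos_right _ hp
  have h := nsmul'_add_of_eq S x (nsmul'_add_mul_of_eq S x hip (i + 1)) ((i + 1) * p - 1 - i)
  rw [nsmul'_add_nsmul']
  convert h using 2 <;> omega

theorem IsPeriodicElem.eIdem_add_eIdem {x : S} (hx : IsPeriodicElem S x) :
    eIdem S x + eIdem S x = eIdem S x :=
  Nat.sInf_mem hx.exists_nsmul'_idem

theorem facX_eq {R : Type*} [CommRing R] (s : S) (a : R) :
    facX R s a = AddMonoidAlgebra.single (s : WithZero S) 1 +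
      AddMonoidAlgebra.single (eIdem S s : WithZero S) (-a) := by
  rw [facX, Xm, Xm, sub_eq_add_neg, AddMonoidAlgebra.single_neg]

/-- nonvanishing of the coefficient `c_e` when `St(e) ∩ Σ(T) = ∅`. -/
theorem stmt9 (S : Type*) [AddCommSemigroup S] (hper : IsPeriodicSemigroup S)
    (R : Type*) [CommRing R] [IsDomain R]
    (m : ℕ) (s : Fin m → S) (a : Fin m → R) (ha : ∀ i, a i ≠ 0)
    (e : S) (he : (e : WithZero S) = ∑ i, (↑(eIdem S (s i)) : WithZero S))
    (hdisj : ¬ ∃ c : S, c + e = e ∧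
      ∃ I : Finset (Fin m), I.Nonempty ∧ (↑c : WithZero S) = ∑ i ∈ I, ↑(s i)) :
    (∏ i, facX R (s i) (a i)).coeff (↑e : WithZero S) ≠ 0 ∧ (∏ i, facX R (s i) (a i)) ≠ 0 := by
  classical
  have hidem (i : Fin m) : (eIdem S (s i) : WithZero S) + eIdem S (s i) = eIdem S (s i) := by
    rw [← WithZero.coe_add, (hper (s i)).eIdem_add_eIdem]
  have hcoeff : (∏ i, facX R (s i) (a i)).coeff (↑e : WithZero S) = ∏ i, -a i := by
    simp_rw [facX_eq, he]
    refine AddMonoidAlgebra.coeff_prod_single_add_single _ _ _ _ fun I hI hne hI_eq => hdisj ?_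
    obtain ⟨c, hc⟩ := WithZero.exists_sum_coe_eq_coe s hne
    refine ⟨c, WithZero.coe_injective ?_, I, hne, hc.symm⟩
    rw [WithZero.coe_add, he, ← hc]
    exact Finset.add_sum_eq_of_add_sum_sdiff_eq hidem hI hI_eq
  have hcoeff_ne : (∏ i, facX R (s i) (a i)).coeff (↑e : WithZero S) ≠ 0 :=
    hcoeff ▸ Finset.prod_ne_zero_iff.mpr fun i _ => neg_ne_zero.mpr (ha i)
  exact ⟨hcoeff_ne, fun h0 => hcoeff_ne (by simp [h0])⟩

end ZS
end
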